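/- arXiv:1704.01505 — 4 statements merged into one kernel-verified Lean document; each statement's English description precedes it below -/
import Mathlib

section
/- Let μ ∈ P₂(ℝᵈ), ν₀, ν₁ ∈ P₂(ℝᵈ), and suppose T₀, T₁ : ℝᵈ → ℝᵈ are Borel maps with T₀#μ = ν₀, T₁#μ = ν₁ realizing the optimal quadratic transport cost, i.e. ∫|Tᵢ(x)-x|² dμ = W₂²(μ, νᵢ). Then for α ∈ [0,1], setting T_α(x) = (1-α)T₀(x) + αT₁(x), one has W₂²(μ, T_α#μ) ≤ (1-α)W₂²(μ, ν₀) + α W₂²(μ, ν₁) - α(1-α)W₂²(ν₀, ν₁). -/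
open MeasureTheory ENNReal Filter Topology Set RealInnerProductSpace

noncomputable section

abbrev Evec (d : ℕ) := EuclideanSpace ℝ (Fin d)

/-- `π` is a coupling of `μ` and `ν`. -/
def IsCoupling {d : ℕ} (π : Measure (Evec d × Evec d)) (μ ν : Measure (Evec d)) : Prop :=
  π.map Prod.fst = μ ∧ π.map Prod.snd = ν

/-- Squared 2-Wasserstein distance. -/
noncomputable def W2sq {d : ℕ} (μ ν : Measure (Evec d)) : ℝ≥0∞ :=
  sInf { c | ∃ π : Measure (Evec d × Evec d), IsProbabilityMeasure π ∧ IsCoupling π μ ν ∧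
    c = ∫⁻ p, (‖p.1 - p.2‖₊ : ℝ≥0∞) ^ 2 ∂π }

/-- 2-Wasserstein distance. -/
noncomputable def W2 {d : ℕ} (μ ν : Measure (Evec d)) : ℝ≥0∞ :=
  W2sq μ ν ^ (1/2 : ℝ)

/-- Finite second moment. -/
def FiniteSecondMoment {d : ℕ} (μ : Measure (Evec d)) : Prop :=
  ∫⁻ x, (‖x‖₊ : ℝ≥0∞) ^ 2 ∂μ < ∞

/-!
The maps `x ↦ (x, T_α x)` and `x ↦ (T₀ x, T₁ x)` push `μ` to couplings of `(μ, T_α # μ)` and of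
`(ν₀, ν₁)`, so both Wasserstein terms on the left are bounded by `μ`-integrals of transport costs.
Pointwise in `x`, with `a = T₀ x`, `b = T₁ x`, `p = x`, the Hilbert-space identity
`‖(1-α)a + αb - p‖² + α(1-α)‖a - b‖² = (1-α)‖a - p‖² + α‖b - p‖²`
turns the sum of these costs into the right-hand side, by optimality of `T₀` and `T₁`.
-/

section ConvexCombination

variable {E : Type*} [NormedAddCommGroup E] [InnerProductSpace ℝ E]

theorem norm_one_sub_smul_add_smul_sq_add (α : ℝ) (u v : E) :
    ‖(1 - α) • u + α • v‖ ^ 2 + α * (1 - α) * ‖u - v‖ ^ 2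
      = (1 - α) * ‖u‖ ^ 2 + α * ‖v‖ ^ 2 := by
  simp only [norm_add_sq_real, norm_sub_sq_real, norm_smul, real_inner_smul_left,
    real_inner_smul_right, mul_pow, Real.norm_eq_abs, sq_abs]
  ring

theorem nnnorm_one_sub_smul_add_smul_sub_sq_add {α : ℝ} (hα : α ∈ Icc (0 : ℝ) 1) (a b p : E) :
    (‖(1 - α) • a + α • b - p‖₊ : ℝ≥0∞) ^ 2 + ENNReal.ofReal (α * (1 - α)) * (‖a - b‖₊ : ℝ≥0∞) ^ 2
      = ENNReal.ofReal (1 - α) * (‖a - p‖₊ : ℝ≥0∞) ^ 2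
        + ENNReal.ofReal α * (‖b - p‖₊ : ℝ≥0∞) ^ 2 := by
  obtain ⟨hα₀, hα₁⟩ := hα
  have h1α : 0 ≤ 1 - α := sub_nonneg.mpr hα₁
  have hcomb : (1 - α) • a + α • b - p = (1 - α) • (a - p) + α • (b - p) := by module
  have hdiff : a - b = (a - p) - (b - p) := by abel
  have hsq : ∀ w : E, (‖w‖₊ : ℝ≥0∞) ^ 2 = ENNReal.ofReal (‖w‖ ^ 2) := fun w => by
    rw [ENNReal.ofReal_pow (norm_nonneg w), ofReal_norm, enorm_eq_nnnorm]
  rw [hcomb, hdiff, hsq, hsq, hsq, hsq, ← ENNReal.ofReal_mul (mul_nonneg hα₀ h1α),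
    ← ENNReal.ofReal_mul h1α, ← ENNReal.ofReal_mul hα₀,
    ← ENNReal.ofReal_add (by positivity) (by positivity),
    ← ENNReal.ofReal_add (by positivity) (by positivity),
    norm_one_sub_smul_add_smul_sq_add]

end ConvexCombination

theorem Measurable.nnnorm_sub_sq {X E : Type*} [MeasurableSpace X] [NormedAddCommGroup E]
    [MeasurableSpace E] [BorelSpace E] [SecondCountableTopology E] {S T : X → E}
    (hS : Measurable S) (hT : Measurable T) :
    Measurable fun x => (‖S x - T x‖₊ : ℝ≥0∞) ^ 2 :=
  (hS.sub hT).enorm.pow_const 2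

section Coupling

variable {d : ℕ} (μ : Measure (Evec d)) [IsProbabilityMeasure μ]

theorem W2sq_map_map_le_lintegral {S T : Evec d → Evec d} (hS : Measurable S)
    (hT : Measurable T) :
    W2sq (μ.map S) (μ.map T) ≤ ∫⁻ x, (‖S x - T x‖₊ : ℝ≥0∞) ^ 2 ∂μ := by
  have hST : Measurable fun x => (S x, T x) := hS.prodMk hT
  refine sInf_le ⟨μ.map fun x => (S x, T x), Measure.isProbabilityMeasure_map hST.aemeasurable,
    ⟨?_, ?_⟩, ?_⟩
  · rw [Measure.map_map measurable_fst hST]; rfl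
  · rw [Measure.map_map measurable_snd hST]; rfl
  · exact (lintegral_map (measurable_fst.nnnorm_sub_sq measurable_snd) hST).symm

theorem W2sq_map_le_lintegral {T : Evec d → Evec d} (hT : Measurable T) :
    W2sq μ (μ.map T) ≤ ∫⁻ x, (‖T x - x‖₊ : ℝ≥0∞) ^ 2 ∂μ := by
  calc W2sq μ (μ.map T) = W2sq (μ.map id) (μ.map T) := by rw [Measure.map_id]
    _ ≤ ∫⁻ x, (‖id x - T x‖₊ : ℝ≥0∞) ^ 2 ∂μ := W2sq_map_map_le_lintegral μ measurable_id hT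
    _ = _ := lintegral_congr fun x => by rw [id, ← nnnorm_neg, neg_sub]

end Coupling

theorem W2sq_convex_generalized_geodesic_general {d : ℕ} (μ ν₀ ν₁ : Measure (Evec d))
    [IsProbabilityMeasure μ]
    (T₀ T₁ : Evec d → Evec d) (hT₀m : Measurable T₀) (hT₁m : Measurable T₁)
    (hT₀ : μ.map T₀ = ν₀) (hT₁ : μ.map T₁ = ν₁)
    (hopt₀ : ∫⁻ x, (‖T₀ x - x‖₊ : ℝ≥0∞) ^ 2 ∂μ = W2sq μ ν₀)
    (hopt₁ : ∫⁻ x, (‖T₁ x - x‖₊ : ℝ≥0∞) ^ 2 ∂μ = W2sq μ ν₁)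
    (α : ℝ) (hα : α ∈ Icc (0:ℝ) 1) :
    W2sq μ (μ.map (fun x => (1 - α) • T₀ x + α • T₁ x))
        + ENNReal.ofReal (α * (1 - α)) * W2sq ν₀ ν₁
      ≤ ENNReal.ofReal (1 - α) * W2sq μ ν₀ + ENNReal.ofReal α * W2sq μ ν₁ := by
  have hTα : Measurable fun x => (1 - α) • T₀ x + α • T₁ x :=
    (hT₀m.const_smul (1 - α)).add (hT₁m.const_smul α)
  subst hT₀ hT₁
  calc _ ≤ ∫⁻ x, (‖(1 - α) • T₀ x + α • T₁ x - x‖₊ : ℝ≥0∞) ^ 2 ∂μ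
          + ENNReal.ofReal (α * (1 - α)) * ∫⁻ x, (‖T₀ x - T₁ x‖₊ : ℝ≥0∞) ^ 2 ∂μ :=
        add_le_add (W2sq_map_le_lintegral μ hTα)
          (mul_le_mul_right (W2sq_map_map_le_lintegral μ hT₀m hT₁m) _)
    _ = ∫⁻ x, (ENNReal.ofReal (1 - α) * (‖T₀ x - x‖₊ : ℝ≥0∞) ^ 2
          + ENNReal.ofReal α * (‖T₁ x - x‖₊ : ℝ≥0∞) ^ 2) ∂μ := by
        rw [← lintegral_const_mul' _ _ ofReal_ne_top,
          ← lintegral_add_left (hTα.nnnorm_sub_sq measurable_id')]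
        exact lintegral_congr fun x => nnnorm_one_sub_smul_add_smul_sub_sq_add hα _ _ x
    _ = _ := by
        rw [lintegral_add_left ((hT₀m.nnnorm_sub_sq measurable_id').const_mul _),
          lintegral_const_mul' _ _ ofReal_ne_top, lintegral_const_mul' _ _ ofReal_ne_top,
          hopt₀, hopt₁]

theorem W2sq_convex_generalized_geodesic {d : ℕ} (μ ν₀ ν₁ : Measure (Evec d))
    [IsProbabilityMeasure μ] [IsProbabilityMeasure ν₀] [IsProbabilityMeasure ν₁]
    (hμ : FiniteSecondMoment μ) (h0 : FiniteSecondMoment ν₀) (h1 : FiniteSecondMoment ν₁)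
    (T₀ T₁ : Evec d → Evec d) (hT₀m : Measurable T₀) (hT₁m : Measurable T₁)
    (hT₀ : μ.map T₀ = ν₀) (hT₁ : μ.map T₁ = ν₁)
    (hopt₀ : ∫⁻ x, (‖T₀ x - x‖₊ : ℝ≥0∞) ^ 2 ∂μ = W2sq μ ν₀)
    (hopt₁ : ∫⁻ x, (‖T₁ x - x‖₊ : ℝ≥0∞) ^ 2 ∂μ = W2sq μ ν₁)
    (α : ℝ) (hα : α ∈ Icc (0:ℝ) 1) :
    W2sq μ (μ.map (fun x => (1 - α) • T₀ x + α • T₁ x))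
        + ENNReal.ofReal (α * (1 - α)) * W2sq ν₀ ν₁
      ≤ ENNReal.ofReal (1 - α) * W2sq μ ν₀ + ENNReal.ofReal α * W2sq μ ν₁ :=
  W2sq_convex_generalized_geodesic_general μ ν₀ ν₁ T₀ T₁ hT₀m hT₁m hT₀ hT₁ hopt₀ hopt₁ α hα
end
end

section
/- Let μ ∈ P₂(ℝᵈ), ν₀, ν₁ ∈ P₂(ℝᵈ) with optimal transport maps T₀ from μ to ν₀ and T₀₁ from ν₀ to ν₁ (i.e. these maps realize the respective W₂ costs). Then for α ∈ [0,1] and ν_α := ((1-α)Id + αT₀₁)#ν₀ (the displacement interpolation), W₂²(μ, ν_α) ≥ (1-α)W₂²(μ, ν₀) + α W₂²(μ, ν₁) - α(1-α)W₂²(ν₀, ν₁); i.e. ν ↦ -W₂²(μ, ν) is displacement convex. -/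
open MeasureTheory ENNReal Filter Topology Set RealInnerProductSpace

noncomputable section

/-!
Let `Tα x = (1 - α) • x + α • T₀₁ x`. Disintegrating a coupling `σ` of `Tα#ν₀` and `μ` over its
first marginal and pulling the conditional kernel back along `Tα` glues `σ` to a coupling `m` of
`ν₀` and `μ` with `(Tα × id)#m = σ`. Integrating the identity
`(1 - α)‖x - y‖² + α‖T₀₁ x - y‖² = ‖Tα x - y‖² + α(1 - α)‖T₀₁ x - x‖²` against `m` gives
`(1 - α) cost(m) + α cost((T₀₁ × id)#m) = cost(σ) + α(1 - α) ∫ ‖T₀₁ x - x‖² dν₀`. The two costs on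
the left bound `W₂²(ν₀, μ)` and `W₂²(ν₁, μ)`, and the last integral is `W₂²(ν₀, ν₁)` because `T₀₁`
is optimal.
-/

open ProbabilityTheory

section Interpolation

variable {E : Type*} [NormedAddCommGroup E] [InnerProductSpace ℝ E]

lemma one_sub_mul_norm_sq_add_mul_norm_sq (α : ℝ) (u v : E) :
    (1 - α) * ‖u‖ ^ 2 + α * ‖v‖ ^ 2 =
      ‖(1 - α) • u + α • v‖ ^ 2 + α * (1 - α) * ‖u - v‖ ^ 2 := by
  rw [norm_add_sq_real, norm_sub_sq_real, norm_smul, norm_smul, real_inner_smul_left,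
    real_inner_smul_right, Real.norm_eq_abs, Real.norm_eq_abs, mul_pow, mul_pow, sq_abs, sq_abs]
  ring

lemma ofReal_one_sub_mul_enorm_sq_add_ofReal_mul_enorm_sq {α : ℝ} (hα : α ∈ Icc (0 : ℝ) 1)
    (u v : E) :
    ENNReal.ofReal (1 - α) * ‖u‖ₑ ^ 2 + ENNReal.ofReal α * ‖v‖ₑ ^ 2 =
      ‖(1 - α) • u + α • v‖ₑ ^ 2 + ENNReal.ofReal (α * (1 - α)) * ‖u - v‖ₑ ^ 2 := by
  obtain ⟨hα₀, hα₁⟩ := hα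
  have hα₁' : 0 ≤ 1 - α := sub_nonneg.mpr hα₁
  have key := congrArg ENNReal.ofReal (one_sub_mul_norm_sq_add_mul_norm_sq α u v)
  rw [ENNReal.ofReal_add (by positivity) (by positivity),
    ENNReal.ofReal_add (by positivity) (by positivity), ENNReal.ofReal_mul hα₁',
    ENNReal.ofReal_mul hα₀, ENNReal.ofReal_mul (by positivity)] at key
  simpa only [ENNReal.ofReal_pow (norm_nonneg _), ofReal_norm] using key

variable [MeasurableSpace E] [BorelSpace E] [SecondCountableTopology E]
  {Ω : Type*} [MeasurableSpace Ω]

lemma ofReal_one_sub_mul_lintegral_add_ofReal_mul_lintegral {α : ℝ} (hα : α ∈ Icc (0 : ℝ) 1)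
    (m : Measure Ω) {f g h : Ω → E} (hf : Measurable f) (hg : Measurable g) (hh : Measurable h) :
    ENNReal.ofReal (1 - α) * ∫⁻ ω, ‖f ω - h ω‖ₑ ^ 2 ∂m
        + ENNReal.ofReal α * ∫⁻ ω, ‖g ω - h ω‖ₑ ^ 2 ∂m =
      ∫⁻ ω, ‖(1 - α) • f ω + α • g ω - h ω‖ₑ ^ 2 ∂m
        + ENNReal.ofReal (α * (1 - α)) * ∫⁻ ω, ‖g ω - f ω‖ₑ ^ 2 ∂m := by
  rw [← lintegral_const_mul' _ _ ofReal_ne_top, ← lintegral_const_mul' _ _ ofReal_ne_top,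
    ← lintegral_const_mul' _ _ ofReal_ne_top, ← lintegral_add_left (by fun_prop),
    ← lintegral_add_left (by fun_prop)]
  refine lintegral_congr fun ω => ?_
  have hcomb : (1 - α) • (f ω - h ω) + α • (g ω - h ω) = (1 - α) • f ω + α • g ω - h ω := by
    module
  rw [ofReal_one_sub_mul_enorm_sq_add_ofReal_mul_enorm_sq hα, hcomb, sub_sub_sub_cancel_right,
    enorm_sub_rev (f ω)]

end Interpolation

section Wasserstein

variable {d : ℕ}

lemma W2sq_map_le_lintegral_s4 {Ω : Type*} [MeasurableSpace Ω] (m : Measure Ω)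
    [IsProbabilityMeasure m] {f g : Ω → Evec d} (hf : Measurable f) (hg : Measurable g) :
    W2sq (m.map f) (m.map g) ≤ ∫⁻ ω, ‖f ω - g ω‖ₑ ^ 2 ∂m := by
  have hfg : Measurable fun ω => (f ω, g ω) := hf.prodMk hg
  refine sInf_le ⟨m.map fun ω => (f ω, g ω), Measure.isProbabilityMeasure_map hfg.aemeasurable,
    ⟨?_, ?_⟩, ?_⟩
  · rw [Measure.map_map measurable_fst hfg]; rfl
  · rw [Measure.map_map measurable_snd hfg]; rfl
  · rw [lintegral_map (by fun_prop) hfg]; rfl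

lemma W2sq_comm (μ ν : Measure (Evec d)) : W2sq μ ν = W2sq ν μ := by
  suffices h : ∀ μ ν : Measure (Evec d), W2sq ν μ ≤ W2sq μ ν from le_antisymm (h ν μ) (h μ ν)
  intro μ ν
  refine le_sInf ?_
  rintro _ ⟨π, hπ, ⟨rfl, rfl⟩, rfl⟩
  exact (W2sq_map_le_lintegral_s4 π measurable_snd measurable_fst).trans_eq
    (lintegral_congr fun p => by rw [enorm_sub_rev]; rfl)

end Wasserstein

section Gluing

variable {X Z Y : Type*} [MeasurableSpace X] [MeasurableSpace Z] [MeasurableSpace Y]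

lemma map_prodMap_compProd_comap (ν : Measure X) [SFinite ν] {T : X → Z} (hT : Measurable T)
    (κ : Kernel Z Y) [IsSFiniteKernel κ] :
    (ν ⊗ₘ κ.comap T hT).map (Prod.map T id) = ν.map T ⊗ₘ κ := by
  ext s hs
  rw [Measure.map_apply (hT.prodMap measurable_id) hs,
    Measure.compProd_apply (hT.prodMap measurable_id hs), Measure.compProd_apply hs,
    lintegral_map (Kernel.measurable_kernel_prodMk_left hs) hT]
  rfl

lemma exists_isMarkovKernel_map_prodMap_compProd_eq [StandardBorelSpace Y] [Nonempty Y]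
    (ν : Measure X) [SFinite ν] {T : X → Z} (hT : Measurable T) (σ : Measure (Z × Y))
    [IsFiniteMeasure σ] (hσ : σ.fst = ν.map T) :
    ∃ κ : Kernel X Y, IsMarkovKernel κ ∧ (ν ⊗ₘ κ).map (Prod.map T id) = σ :=
  ⟨σ.condKernel.comap T hT, inferInstance, by
    rw [map_prodMap_compProd_comap ν hT, ← hσ, σ.disintegrate]⟩

end Gluing

theorem neg_W2sq_displacement_convex_general {d : ℕ} (μ ν₀ ν₁ : Measure (Evec d))
    [IsProbabilityMeasure ν₀]
    (T₀₁ : Evec d → Evec d) (hT₀₁m : Measurable T₀₁)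
    (hT₀₁ : ν₀.map T₀₁ = ν₁)
    (hopt₀₁ : ∫⁻ x, (‖T₀₁ x - x‖₊ : ℝ≥0∞) ^ 2 ∂ν₀ = W2sq ν₀ ν₁)
    (α : ℝ) (hα : α ∈ Icc (0:ℝ) 1) :
    ENNReal.ofReal (1 - α) * W2sq μ ν₀ + ENNReal.ofReal α * W2sq μ ν₁
        - ENNReal.ofReal (α * (1 - α)) * W2sq ν₀ ν₁
      ≤ W2sq μ (ν₀.map (fun x => (1 - α) • x + α • T₀₁ x)) := by
  set Tα : Evec d → Evec d := fun x => (1 - α) • x + α • T₀₁ x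
  have hTα : Measurable Tα := by fun_prop
  rw [W2sq_comm μ, W2sq_comm μ, W2sq_comm μ]
  refine le_sInf ?_
  rintro _ ⟨σ, hσ, ⟨hσ₁, hσ₂⟩, rfl⟩
  obtain ⟨κ, hκ, hσ_eq⟩ := exists_isMarkovKernel_map_prodMap_compProd_eq ν₀ hTα σ hσ₁
  set m := ν₀ ⊗ₘ κ
  have hm₁ : m.map Prod.fst = ν₀ := Measure.fst_compProd ν₀ κ
  have hm₂ : m.map Prod.snd = μ := by
    rw [← hσ₂, ← hσ_eq, Measure.map_map measurable_snd (hTα.prodMap measurable_id)]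
    rfl
  have h₀ : W2sq ν₀ μ ≤ ∫⁻ p, ‖p.1 - p.2‖ₑ ^ 2 ∂m :=
    hm₁ ▸ hm₂ ▸ W2sq_map_le_lintegral_s4 m measurable_fst measurable_snd
  have h₁ : W2sq ν₁ μ ≤ ∫⁻ p, ‖T₀₁ p.1 - p.2‖ₑ ^ 2 ∂m := by
    have hν₁ : m.map (fun p => T₀₁ p.1) = ν₁ := by
      rw [← hT₀₁, ← hm₁, Measure.map_map hT₀₁m measurable_fst]; rfl
    exact hν₁ ▸ hm₂ ▸ W2sq_map_le_lintegral_s4 m (hT₀₁m.comp measurable_fst) measurable_snd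
  have h₀₁ : ∫⁻ p, ‖T₀₁ p.1 - p.1‖ₑ ^ 2 ∂m = W2sq ν₀ ν₁ := by
    rw [← hopt₀₁, ← hm₁, lintegral_map (by fun_prop) measurable_fst]; rfl
  have hσ_cost : ∫⁻ p, (‖p.1 - p.2‖₊ : ℝ≥0∞) ^ 2 ∂σ = ∫⁻ p, ‖Tα p.1 - p.2‖ₑ ^ 2 ∂m := by
    rw [← hσ_eq, lintegral_map (by fun_prop) (hTα.prodMap measurable_id)]; rfl
  calc _ ≤ ENNReal.ofReal (1 - α) * ∫⁻ p, ‖p.1 - p.2‖ₑ ^ 2 ∂m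
          + ENNReal.ofReal α * ∫⁻ p, ‖T₀₁ p.1 - p.2‖ₑ ^ 2 ∂m
          - ENNReal.ofReal (α * (1 - α)) * ∫⁻ p, ‖T₀₁ p.1 - p.1‖ₑ ^ 2 ∂m := by
        rw [h₀₁]; gcongr
    _ = ∫⁻ p, ‖Tα p.1 - p.2‖ₑ ^ 2 ∂m
          + ENNReal.ofReal (α * (1 - α)) * ∫⁻ p, ‖T₀₁ p.1 - p.1‖ₑ ^ 2 ∂m
          - ENNReal.ofReal (α * (1 - α)) * ∫⁻ p, ‖T₀₁ p.1 - p.1‖ₑ ^ 2 ∂m := by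
        rw [ofReal_one_sub_mul_lintegral_add_ofReal_mul_lintegral hα m (g := fun p => T₀₁ p.1)
          measurable_fst (by fun_prop) measurable_snd]
    _ ≤ _ := add_tsub_le_right
    _ = _ := hσ_cost.symm

theorem neg_W2sq_displacement_convex {d : ℕ} (μ ν₀ ν₁ : Measure (Evec d))
    [IsProbabilityMeasure μ] [IsProbabilityMeasure ν₀] [IsProbabilityMeasure ν₁]
    (hμ : FiniteSecondMoment μ) (h0 : FiniteSecondMoment ν₀) (h1 : FiniteSecondMoment ν₁)
    (T₀ T₀₁ : Evec d → Evec d) (hT₀m : Measurable T₀) (hT₀₁m : Measurable T₀₁)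
    (hT₀ : μ.map T₀ = ν₀) (hT₀₁ : ν₀.map T₀₁ = ν₁)
    (hopt₀ : ∫⁻ x, (‖T₀ x - x‖₊ : ℝ≥0∞) ^ 2 ∂μ = W2sq μ ν₀)
    (hopt₀₁ : ∫⁻ x, (‖T₀₁ x - x‖₊ : ℝ≥0∞) ^ 2 ∂ν₀ = W2sq ν₀ ν₁)
    (α : ℝ) (hα : α ∈ Icc (0:ℝ) 1) :
    ENNReal.ofReal (1 - α) * W2sq μ ν₀ + ENNReal.ofReal α * W2sq μ ν₁
        - ENNReal.ofReal (α * (1 - α)) * W2sq ν₀ ν₁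
      ≤ W2sq μ (ν₀.map (fun x => (1 - α) • x + α • T₀₁ x)) :=
  neg_W2sq_displacement_convex_general μ ν₀ ν₁ T₀₁ hT₀₁m hT₀₁ hopt₀₁ α hα
end
end

section
/- Let K ⊆ P₂(ℝᵈ) be such that for any ν₀, ν₁ ∈ K and any random variables X₀ ∼ ν₀, X₁ ∼ ν₁ on a common probability space, the law of (1-α)X₀ + αX₁ belongs to K for all α ∈ [0,1]. Suppose μ ∈ P₂(ℝᵈ) is absolutely continuous with respect to Lebesgue measure and suppose there exist two minimizers μ₁, μ₂ ∈ K of ν ↦ W₂(μ, ν) over K. Then μ₁ = μ₂. -/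
open MeasureTheory ENNReal Filter Topology Set RealInnerProductSpace

noncomputable section

/-!
Glue near-optimal couplings of `μ` with `μ₁` and of `μ` with `μ₂` along their common first
marginal into the law of a triple `(X, Y₁, Y₂)`. The law of the midpoint of `Y₁` and `Y₂` lies
in `K`, so its squared distance to `μ` is at least the minimum `m`; Apollonius' identity
`‖x - y₁‖² + ‖x - y₂‖² = 2 ‖x - (y₁ + y₂) / 2‖² + ‖y₁ - y₂‖² / 2`, integrated over the triple,
then gives `2 m + W₂²(μ₁, μ₂) / 2 ≤ 2 m + ε` for every `ε > 0`. Finally, couplings of arbitrarily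
small quadratic cost force the Lévy–Prokhorov distance between `μ₁` and `μ₂` to vanish.
-/

open ProbabilityTheory
open scoped NNReal

section Gluing

variable {X Y Z : Type*} [MeasurableSpace X] [MeasurableSpace Y] [MeasurableSpace Z]
  [StandardBorelSpace Y] [Nonempty Y] [StandardBorelSpace Z] [Nonempty Z]

theorem exists_gluing (π₁ : Measure (X × Y)) (π₂ : Measure (X × Z)) [IsProbabilityMeasure π₁]
    [IsProbabilityMeasure π₂] (h : π₁.fst = π₂.fst) :
    ∃ ρ : Measure (X × Y × Z), IsProbabilityMeasure ρ ∧
      ρ.map (Prod.map id Prod.fst) = π₁ ∧ ρ.map (Prod.map id Prod.snd) = π₂ := by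
  refine ⟨π₁.fst ⊗ₘ (π₁.condKernel ×ₖ π₂.condKernel), inferInstance, ?_, ?_⟩
  · rw [← Measure.compProd_map measurable_fst, ← Kernel.fst_eq, Kernel.fst_prod,
      π₁.disintegrate]
  · rw [← Measure.compProd_map measurable_snd, ← Kernel.snd_eq, Kernel.snd_prod, h,
      π₂.disintegrate]

end Gluing

section SqCost

variable {E : Type*} [NormedAddCommGroup E] [MeasurableSpace E]

def sqCost (π : Measure (E × E)) : ℝ≥0∞ :=
  ∫⁻ p, (‖p.1 - p.2‖₊ : ℝ≥0∞) ^ 2 ∂π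

variable [BorelSpace E] [SecondCountableTopology E]

@[fun_prop]
theorem measurable_nnnorm_sub_sq : Measurable fun p : E × E => (‖p.1 - p.2‖₊ : ℝ≥0∞) ^ 2 := by
  fun_prop

theorem sqCost_map {α : Type*} [MeasurableSpace α] {ρ : Measure α} {f : α → E × E}
    (hf : Measurable f) : sqCost (ρ.map f) = ∫⁻ a, (‖(f a).1 - (f a).2‖₊ : ℝ≥0∞) ^ 2 ∂ρ :=
  lintegral_map measurable_nnnorm_sub_sq hf

end SqCost

section Apollonius

variable {E : Type*} [NormedAddCommGroup E] [InnerProductSpace ℝ E]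

theorem nnnorm_sub_sq_add_nnnorm_sub_sq (x y z : E) :
    (‖x - y‖₊ : ℝ≥0∞) ^ 2 + (‖x - z‖₊ : ℝ≥0∞) ^ 2
      = 2 * (‖x - midpoint ℝ y z‖₊ : ℝ≥0∞) ^ 2 + 2⁻¹ * (‖y - z‖₊ : ℝ≥0∞) ^ 2 := by
  have hreal := EuclideanGeometry.dist_sq_add_dist_sq_eq_two_mul_dist_midpoint_sq_add_half_dist_sq
    x y z
  simp only [dist_eq_norm] at hreal
  have hnnreal :
      ‖x - y‖₊ ^ 2 + ‖x - z‖₊ ^ 2 = 2 * ‖x - midpoint ℝ y z‖₊ ^ 2 + 2⁻¹ * ‖y - z‖₊ ^ 2 := by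
    apply NNReal.eq
    push_cast [coe_nnnorm]
    linarith
  have h := congrArg ((↑) : ℝ≥0 → ℝ≥0∞) hnnreal
  push_cast [ENNReal.coe_inv two_ne_zero] at h
  exact h

variable [MeasurableSpace E] [BorelSpace E] [SecondCountableTopology E]

@[fun_prop]
theorem measurable_midpoint : Measurable fun p : E × E => midpoint ℝ p.1 p.2 := by
  simp_rw [midpoint_eq_smul_add]
  fun_prop

theorem sqCost_add_sqCost_eq (ρ : Measure (E × E × E)) :
    sqCost (ρ.map (Prod.map id Prod.fst)) + sqCost (ρ.map (Prod.map id Prod.snd))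
      = 2 * sqCost (ρ.map fun p => (p.1, midpoint ℝ p.2.1 p.2.2))
        + 2⁻¹ * sqCost (ρ.map Prod.snd) := by
  simp only [sqCost_map (by fun_prop : Measurable (Prod.map id Prod.fst : E × E × E → E × E)),
    sqCost_map (by fun_prop : Measurable (Prod.map id Prod.snd : E × E × E → E × E)),
    sqCost_map (by fun_prop : Measurable fun p : E × E × E => (p.1, midpoint ℝ p.2.1 p.2.2)),
    sqCost_map measurable_snd]
  rw [← lintegral_add_left (by fun_prop), ← lintegral_const_mul _ (by fun_prop),
    ← lintegral_const_mul _ (by fun_prop), ← lintegral_add_left (by fun_prop)]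
  exact lintegral_congr fun p => nnnorm_sub_sq_add_nnnorm_sub_sq p.1 p.2.1 p.2.2

end Apollonius

section Moments

variable {E : Type*} [NormedAddCommGroup E] [MeasurableSpace E] [OpensMeasurableSpace E]

theorem sqCost_le_two_mul_lintegral_add {π : Measure (E × E)} {μ ν : Measure E}
    (h₁ : π.map Prod.fst = μ) (h₂ : π.map Prod.snd = ν) :
    sqCost π ≤ 2 * ∫⁻ x, (‖x‖₊ : ℝ≥0∞) ^ 2 ∂μ + 2 * ∫⁻ y, (‖y‖₊ : ℝ≥0∞) ^ 2 ∂ν := by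
  have hpt (x y : E) :
      (‖x - y‖₊ : ℝ≥0∞) ^ 2 ≤ 2 * (‖x‖₊ : ℝ≥0∞) ^ 2 + 2 * (‖y‖₊ : ℝ≥0∞) ^ 2 := by
    have : ‖x - y‖₊ ^ 2 ≤ 2 * ‖x‖₊ ^ 2 + 2 * ‖y‖₊ ^ 2 := by
      rw [← mul_add]
      exact (pow_le_pow_left₀ zero_le (nnnorm_sub_le x y) 2).trans add_sq_le
    exact_mod_cast this
  have hsq : Measurable fun x : E => (‖x‖₊ : ℝ≥0∞) ^ 2 := by fun_prop
  have hsq₁ : Measurable fun p : E × E => (‖p.1‖₊ : ℝ≥0∞) ^ 2 := hsq.comp measurable_fst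
  have hsq₂ : Measurable fun p : E × E => (‖p.2‖₊ : ℝ≥0∞) ^ 2 := hsq.comp measurable_snd
  rw [← h₁, ← h₂, lintegral_map hsq measurable_fst, lintegral_map hsq measurable_snd,
    ← lintegral_const_mul _ hsq₁, ← lintegral_const_mul _ hsq₂,
    ← lintegral_add_left (hsq₁.const_mul _)]
  exact lintegral_mono fun p => hpt p.1 p.2

end Moments

section Wasserstein

variable {d : ℕ}

theorem W2_le_W2_iff {μ ν μ' ν' : Measure (Evec d)} :
    W2 μ ν ≤ W2 μ' ν' ↔ W2sq μ ν ≤ W2sq μ' ν' :=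
  ENNReal.rpow_le_rpow_iff (by norm_num)

theorem W2sq_le_sqCost {μ ν : Measure (Evec d)} {π : Measure (Evec d × Evec d)}
    [IsProbabilityMeasure π] (h : IsCoupling π μ ν) : W2sq μ ν ≤ sqCost π :=
  sInf_le ⟨π, inferInstance, h, rfl⟩

theorem exists_sqCost_lt_of_W2sq_lt {μ ν : Measure (Evec d)} {c : ℝ≥0∞} (h : W2sq μ ν < c) :
    ∃ π : Measure (Evec d × Evec d), IsProbabilityMeasure π ∧ IsCoupling π μ ν ∧
      sqCost π < c := by
  obtain ⟨_, ⟨π, hπ, hcpl, rfl⟩, hlt⟩ := sInf_lt_iff.1 h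
  exact ⟨π, hπ, hcpl, hlt⟩

theorem isCoupling_prod (μ ν : Measure (Evec d)) [IsProbabilityMeasure μ]
    [IsProbabilityMeasure ν] : IsCoupling (μ.prod ν) μ ν := by
  simp [IsCoupling, Measure.map_fst_prod, Measure.map_snd_prod]

theorem W2sq_lt_top {μ ν : Measure (Evec d)} [IsProbabilityMeasure μ] [IsProbabilityMeasure ν]
    (hμ : FiniteSecondMoment μ) (hν : FiniteSecondMoment ν) : W2sq μ ν < ∞ := by
  have hcpl := isCoupling_prod μ ν
  calc W2sq μ ν ≤ sqCost (μ.prod ν) := W2sq_le_sqCost hcpl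
    _ ≤ 2 * ∫⁻ x, (‖x‖₊ : ℝ≥0∞) ^ 2 ∂μ + 2 * ∫⁻ y, (‖y‖₊ : ℝ≥0∞) ^ 2 ∂ν :=
      sqCost_le_two_mul_lintegral_add hcpl.1 hcpl.2
    _ < ∞ := by unfold FiniteSecondMoment at hμ hν; finiteness

end Wasserstein

section Midpoint

variable {d : ℕ}

theorem exists_isCoupling_W2sq_midpoint_le {μ μ₁ μ₂ : Measure (Evec d)}
    {π₁ π₂ : Measure (Evec d × Evec d)} [IsProbabilityMeasure π₁] [IsProbabilityMeasure π₂]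
    (h₁ : IsCoupling π₁ μ μ₁) (h₂ : IsCoupling π₂ μ μ₂) :
    ∃ π : Measure (Evec d × Evec d), IsProbabilityMeasure π ∧ IsCoupling π μ₁ μ₂ ∧
      2 * W2sq μ (π.map fun p => midpoint ℝ p.1 p.2) + 2⁻¹ * W2sq μ₁ μ₂
        ≤ sqCost π₁ + sqCost π₂ := by
  obtain ⟨ρ, hρ, hρ₁, hρ₂⟩ := exists_gluing π₁ π₂ (h₁.1.trans h₂.1.symm)
  have hf₁ : Measurable (Prod.map id Prod.fst : Evec d × Evec d × Evec d → _) := by fun_prop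
  have hf₂ : Measurable (Prod.map id Prod.snd : Evec d × Evec d × Evec d → _) := by fun_prop
  have hfm : Measurable fun p : Evec d × Evec d × Evec d => (p.1, midpoint ℝ p.2.1 p.2.2) := by
    fun_prop
  have hcpl : IsCoupling (ρ.map Prod.snd) μ₁ μ₂ := by
    constructor
    · rw [← h₁.2, ← hρ₁, Measure.map_map measurable_fst measurable_snd,
        Measure.map_map measurable_snd hf₁]
      rfl
    · rw [← h₂.2, ← hρ₂, Measure.map_map measurable_snd measurable_snd,
        Measure.map_map measurable_snd hf₂]
      rfl
  have hmid : IsCoupling (ρ.map fun p => (p.1, midpoint ℝ p.2.1 p.2.2)) μ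
      ((ρ.map Prod.snd).map fun p => midpoint ℝ p.1 p.2) := by
    constructor
    · rw [← h₁.1, ← hρ₁, Measure.map_map measurable_fst hfm, Measure.map_map measurable_fst hf₁]
      rfl
    · rw [Measure.map_map measurable_snd hfm, Measure.map_map measurable_midpoint measurable_snd]
      rfl
  have := Measure.isProbabilityMeasure_map (μ := ρ) hfm.aemeasurable
  have := Measure.isProbabilityMeasure_map (μ := ρ) measurable_snd.aemeasurable
  refine ⟨ρ.map Prod.snd, inferInstance, hcpl, ?_⟩
  rw [← hρ₁, ← hρ₂, sqCost_add_sqCost_eq]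
  gcongr
  · exact W2sq_le_sqCost hmid
  · exact W2sq_le_sqCost hcpl

end Midpoint

section ZeroCost

open Metric

theorem eq_of_levyProkhorovEDist_eq_zero {Ω : Type*} [PseudoEMetricSpace Ω] [MeasurableSpace Ω]
    [BorelSpace Ω] {μ ν : Measure Ω} [IsProbabilityMeasure μ] [IsProbabilityMeasure ν]
    (h : levyProkhorovEDist μ ν = 0) : μ = ν := by
  let P : LevyProkhorov (ProbabilityMeasure Ω) := .ofMeasure ⟨μ, ‹_›⟩
  let Q : LevyProkhorov (ProbabilityMeasure Ω) := .ofMeasure ⟨ν, ‹_›⟩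
  exact congrArg (fun R => R.toMeasure.toMeasure) (eq_of_edist_eq_zero h : P = Q)

theorem measure_le_measure_thickening_add {X : Type*} [PseudoMetricSpace X] [MeasurableSpace X]
    [OpensMeasurableSpace X] {π : Measure (X × X)} {ν₁ ν₂ : Measure X}
    (h₁ : π.map Prod.fst = ν₁) (h₂ : π.map Prod.snd = ν₂) {B : Set X} (hB : MeasurableSet B)
    (δ : ℝ) : ν₁ B ≤ ν₂ (thickening δ B) + π {p | ENNReal.ofReal δ ≤ edist p.1 p.2} := by
  rw [← h₁, ← h₂, Measure.map_apply measurable_fst hB,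
    Measure.map_apply measurable_snd isOpen_thickening.measurableSet]
  refine (measure_mono fun p hp => ?_).trans (measure_union_le _ _)
  by_cases hfar : ENNReal.ofReal δ ≤ edist p.1 p.2
  · exact Or.inr hfar
  · rw [not_le, edist_comm] at hfar
    exact Or.inl <| mem_thickening_iff_infEDist_lt.2 <|
      (infEDist_le_edist_of_mem (x := p.2) hp).trans_lt hfar

variable {E : Type*} [NormedAddCommGroup E] [MeasurableSpace E] [BorelSpace E]
  [SecondCountableTopology E]

theorem sq_mul_measure_edist_ge_le_sqCost (π : Measure (E × E)) (ε : ℝ≥0∞) :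
    ε ^ 2 * π {p | ε ≤ edist p.1 p.2} ≤ sqCost π := by
  calc ε ^ 2 * π {p | ε ≤ edist p.1 p.2}
      ≤ ε ^ 2 * π {p | ε ^ 2 ≤ (‖p.1 - p.2‖₊ : ℝ≥0∞) ^ 2} := by
        gcongr ε ^ 2 * π ?_
        intro p (hp : ε ≤ edist p.1 p.2)
        rw [edist_eq_enorm_sub] at hp
        exact pow_le_pow_left₀ zero_le hp 2
    _ ≤ sqCost π := mul_meas_ge_le_lintegral₀ measurable_nnnorm_sub_sq.aemeasurable _

theorem eq_of_forall_exists_sqCost_lt {μ ν : Measure E} [IsProbabilityMeasure μ]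
    [IsProbabilityMeasure ν]
    (h : ∀ c : ℝ≥0∞, 0 < c → ∃ π : Measure (E × E),
      π.map Prod.fst = μ ∧ π.map Prod.snd = ν ∧ sqCost π < c) :
    μ = ν := by
  refine eq_of_levyProkhorovEDist_eq_zero (nonpos_iff_eq_zero.1 ?_)
  refine levyProkhorovEDist_le_of_forall_le μ ν 0 fun ε B hε hεtop hB => ?_
  -- by Markov, a coupling of cost `< ε ^ 3` moves mass `≤ ε` by a distance `≥ ε`
  obtain ⟨π, h₁, h₂, hcost⟩ := h (ε ^ 3) (by positivity)
  calc μ B ≤ ν (thickening ε.toReal B) + π {p | ε ≤ edist p.1 p.2} := by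
        simpa [ofReal_toReal hεtop.ne] using measure_le_measure_thickening_add h₁ h₂ hB ε.toReal
    _ ≤ ν (thickening ε.toReal B) + ε := by
        gcongr
        refine (ENNReal.mul_le_mul_iff_right (a := ε ^ 2) (by positivity) (by finiteness)).1 ?_
        calc ε ^ 2 * π {p | ε ≤ edist p.1 p.2} ≤ sqCost π := sq_mul_measure_edist_ge_le_sqCost π ε
          _ ≤ ε ^ 3 := hcost.le
          _ = ε ^ 2 * ε := by ring

end ZeroCost

section Projection

variable {d : ℕ}

theorem eq_of_W2sq_eq_zero {μ ν : Measure (Evec d)} [IsProbabilityMeasure μ]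
    [IsProbabilityMeasure ν] (h : W2sq μ ν = 0) : μ = ν :=
  eq_of_forall_exists_sqCost_lt fun _ hc =>
    let ⟨π, _, hcpl, hlt⟩ := exists_sqCost_lt_of_W2sq_lt (h ▸ hc)
    ⟨π, hcpl.1, hcpl.2, hlt⟩

theorem W2sq_eq_zero_of_isMinOn {K : Set (Measure (Evec d))}
    (hK : ∀ π : Measure (Evec d × Evec d), IsProbabilityMeasure π → π.map Prod.fst ∈ K →
      π.map Prod.snd ∈ K → π.map (fun p => midpoint ℝ p.1 p.2) ∈ K)
    {μ μ₁ μ₂ : Measure (Evec d)} (hμ₁ : μ₁ ∈ K) (hμ₂ : μ₂ ∈ K)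
    (hmin₁ : IsMinOn (W2sq μ) K μ₁) (hmin₂ : IsMinOn (W2sq μ) K μ₂) (hfin : W2sq μ μ₁ ≠ ∞) :
    W2sq μ₁ μ₂ = 0 := by
  set m := W2sq μ μ₁
  have hm₂ : W2sq μ μ₂ = m := le_antisymm (hmin₂ hμ₁) (hmin₁ hμ₂)
  suffices h : 2 * m + 2⁻¹ * W2sq μ₁ μ₂ ≤ 2 * m + 0 by
    simpa using (ENNReal.add_le_add_iff_left (by finiteness)).1 h
  refine ENNReal.le_of_forall_pos_le_add fun ε hε _ => ?_
  have hlt : m < m + ε / 2 := ENNReal.lt_add_right hfin (by simpa using hε.ne')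
  obtain ⟨π₁, _, hπ₁, hcost₁⟩ := exists_sqCost_lt_of_W2sq_lt hlt
  obtain ⟨π₂, _, hπ₂, hcost₂⟩ := exists_sqCost_lt_of_W2sq_lt (by rwa [hm₂])
  obtain ⟨π, hπ, hcpl, hle⟩ := exists_isCoupling_W2sq_midpoint_le hπ₁ hπ₂
  have hmid := hK π hπ (hcpl.1 ▸ hμ₁) (hcpl.2 ▸ hμ₂)
  calc 2 * m + 2⁻¹ * W2sq μ₁ μ₂
      ≤ 2 * W2sq μ (π.map fun p => midpoint ℝ p.1 p.2) + 2⁻¹ * W2sq μ₁ μ₂ := by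
        gcongr
        exact hmin₁ hmid
    _ ≤ sqCost π₁ + sqCost π₂ := hle
    _ ≤ (m + ε / 2) + (m + ε / 2) := add_le_add hcost₁.le hcost₂.le
    _ = 2 * m + 0 + ε := by rw [add_zero, add_add_add_comm, ENNReal.add_halves, two_mul]

end Projection

theorem W2_proj_unique_general {d : ℕ} (K : Set (Measure (Evec d)))
    (hKconv : ∀ ν₀ ∈ K, ∀ ν₁ ∈ K, ∀ π : Measure (Evec d × Evec d),
      IsProbabilityMeasure π → π.map Prod.fst = ν₀ → π.map Prod.snd = ν₁ →
      ∀ α ∈ Icc (0:ℝ) 1, π.map (fun p => (1 - α) • p.1 + α • p.2) ∈ K)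
    (hKprob : ∀ ν ∈ K, IsProbabilityMeasure ν)
    (hK2 : ∀ ν ∈ K, FiniteSecondMoment ν)
    (μ : Measure (Evec d)) [IsProbabilityMeasure μ]
    (hμ2 : FiniteSecondMoment μ)
    (μ₁ μ₂ : Measure (Evec d)) (hμ₁ : μ₁ ∈ K) (hμ₂ : μ₂ ∈ K)
    (hmin₁ : ∀ ν ∈ K, W2 μ μ₁ ≤ W2 μ ν)
    (hmin₂ : ∀ ν ∈ K, W2 μ μ₂ ≤ W2 μ ν) :
    μ₁ = μ₂ := by
  have := hKprob μ₁ hμ₁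
  have := hKprob μ₂ hμ₂
  have hmid : ∀ π : Measure (Evec d × Evec d), IsProbabilityMeasure π → π.map Prod.fst ∈ K →
      π.map Prod.snd ∈ K → π.map (fun p => midpoint ℝ p.1 p.2) ∈ K := by
    intro π hπ h₀ h₁
    rw [show (fun p : Evec d × Evec d => midpoint ℝ p.1 p.2)
        = fun p => (1 - ⅟2 : ℝ) • p.1 + (⅟2 : ℝ) • p.2 from
      funext fun p => AffineMap.lineMap_apply_module p.1 p.2 _]
    exact hKconv _ h₀ _ h₁ π hπ rfl rfl (⅟2) ⟨by norm_num, by norm_num⟩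
  have hminOn {ν₀ : Measure (Evec d)} (h : ∀ ν ∈ K, W2 μ ν₀ ≤ W2 μ ν) :
      IsMinOn (W2sq μ) K ν₀ :=
    isMinOn_iff.2 fun ν hν => W2_le_W2_iff.1 (h ν hν)
  exact eq_of_W2sq_eq_zero <| W2sq_eq_zero_of_isMinOn hmid hμ₁ hμ₂ (hminOn hmin₁)
    (hminOn hmin₂) (W2sq_lt_top hμ2 (hK2 μ₁ hμ₁)).ne

theorem W2_proj_unique {d : ℕ} (K : Set (Measure (Evec d)))
    (hKconv : ∀ ν₀ ∈ K, ∀ ν₁ ∈ K, ∀ π : Measure (Evec d × Evec d),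
      IsProbabilityMeasure π → π.map Prod.fst = ν₀ → π.map Prod.snd = ν₁ →
      ∀ α ∈ Icc (0:ℝ) 1, π.map (fun p => (1 - α) • p.1 + α • p.2) ∈ K)
    (hKprob : ∀ ν ∈ K, IsProbabilityMeasure ν)
    (hK2 : ∀ ν ∈ K, FiniteSecondMoment ν)
    (μ : Measure (Evec d)) [IsProbabilityMeasure μ]
    (hμ2 : FiniteSecondMoment μ) (hμac : μ ≪ MeasureTheory.volume)
    (μ₁ μ₂ : Measure (Evec d)) (hμ₁ : μ₁ ∈ K) (hμ₂ : μ₂ ∈ K)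
    (hmin₁ : ∀ ν ∈ K, W2 μ μ₁ ≤ W2 μ ν)
    (hmin₂ : ∀ ν ∈ K, W2 μ μ₂ ≤ W2 μ ν) :
    μ₁ = μ₂ :=
  W2_proj_unique_general K hKconv hKprob hK2 μ hμ2 μ₁ μ₂ hμ₁ hμ₂ hmin₁ hmin₂
end
end

section
/- Let (Ω, F, P) be a probability space, C ⊆ H := L²(Ω; ℝᵈ) a closed convex set, and suppose there exist Y ∈ H and r > 0 such that Y + rZ ∈ C for every Z ∈ H with ‖Z‖_{L^∞} ≤ 1 (an interior-point condition). Then for every X ∈ H, r·E[|P_C(X) - X|] ≤ ⟨Y - X, P_C(X) - X⟩ ≤ ‖Y - X‖·‖P_C(X) - X‖, where P_C is the metric projection onto C and E[|·|] denotes the expectation of the pointwise Euclidean norm. -/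
/-! The metric projection onto a convex set satisfies the variational inequality
`E⟪X - P_C X, W - P_C X⟫ ≤ 0` for all `W ∈ C`; this is the Hilbert-space characterisation of
projections, applied in `L²` to the image of `C`. The interior-point condition allows the test
point `W = Y + r Z` with `Z` the unit vector in the direction of `X - P_C X`, and the inner
product of `X - P_C X` with `r Z` is exactly `r |X - P_C X|`. The second inequality is
Cauchy–Schwarz in `L²`. -/

open MeasureTheory Set RealInnerProductSpace

section Hilbert

variable {F : Type*} [NormedAddCommGroup F] [InnerProductSpace ℝ F]

theorem real_inner_sub_le_zero_of_forall_norm_sub_le {K : Set F} (hK : Convex ℝ K) {u v : F}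
    (hv : v ∈ K) (hmin : ∀ w ∈ K, ‖u - v‖ ≤ ‖u - w‖) {w : F} (hw : w ∈ K) :
    ⟪u - v, w - v⟫ ≤ 0 := by
  have : Nonempty K := ⟨⟨v, hv⟩⟩
  refine (norm_eq_iInf_iff_real_inner_le_zero hK hv).1 (le_antisymm ?_ ?_) w hw
  · exact le_ciInf fun w => hmin w w.2
  · exact ciInf_le ⟨0, forall_mem_range.2 fun (w : K) => norm_nonneg (u - w)⟩ ⟨v, hv⟩

theorem real_inner_sub_add_smul_inv_norm_smul_le (x p y : F) (r : ℝ) :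
    r * ‖p - x‖ - ⟪x - p, y + r • (‖x - p‖⁻¹ • (x - p)) - p⟫ ≤ ⟪y - x, p - x⟫ := by
  have hunit : ⟪x - p, ‖x - p‖⁻¹ • (x - p)⟫ = ‖x - p‖ := by
    rcases eq_or_ne (x - p) 0 with h | h
    · simp [h]
    · rw [real_inner_smul_right, real_inner_self_eq_norm_sq, sq, ← mul_assoc,
        inv_mul_cancel₀ (norm_ne_zero_iff.2 h), one_mul]
  have hsplit : y + r • (‖x - p‖⁻¹ • (x - p)) - p
      = (y - x) + (x - p) + r • (‖x - p‖⁻¹ • (x - p)) := by abel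
  have hflip : ⟪y - x, p - x⟫ = -⟪x - p, y - x⟫ := by
    rw [← neg_sub x p, inner_neg_right, real_inner_comm]
  rw [hsplit, inner_add_right, inner_add_right, real_inner_smul_right, hunit,
    real_inner_self_eq_norm_sq, hflip, norm_sub_rev p x]
  nlinarith [sq_nonneg ‖x - p‖]

end Hilbert

namespace MeasureTheory

variable {Ω E : Type*} [MeasurableSpace Ω] [NormedAddCommGroup E] [InnerProductSpace ℝ E]
  {P : Measure Ω} {f g : Ω → E}

theorem MemLp.integral_inner_eq_inner_toLp (hf : MemLp f 2 P) (hg : MemLp g 2 P) :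
    ∫ ω, ⟪f ω, g ω⟫ ∂P = ⟪hf.toLp f, hg.toLp g⟫ := by
  rw [L2.inner_def]
  refine integral_congr_ae ?_
  filter_upwards [hf.coeFn_toLp, hg.coeFn_toLp] with ω hfω hgω
  rw [hfω, hgω]

theorem MemLp.integral_norm_sq_eq_norm_toLp_sq (hf : MemLp f 2 P) :
    ∫ ω, ‖f ω‖ ^ 2 ∂P = ‖hf.toLp f‖ ^ 2 := by
  simp_rw [← real_inner_self_eq_norm_sq]
  exact hf.integral_inner_eq_inner_toLp hf

theorem MemLp.integrable_inner (hf : MemLp f 2 P) (hg : MemLp g 2 P) :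
    Integrable (fun ω => ⟪f ω, g ω⟫) P := by
  refine (L2.integrable_inner (hf.toLp f) (hg.toLp g)).congr ?_
  filter_upwards [hf.coeFn_toLp, hg.coeFn_toLp] with ω hfω hgω
  rw [hfω, hgω]

theorem integral_inner_le_sqrt_mul_sqrt (hf : MemLp f 2 P) (hg : MemLp g 2 P) :
    ∫ ω, ⟪f ω, g ω⟫ ∂P ≤ √(∫ ω, ‖f ω‖ ^ 2 ∂P) * √(∫ ω, ‖g ω‖ ^ 2 ∂P) := by
  rw [hf.integral_inner_eq_inner_toLp hg, hf.integral_norm_sq_eq_norm_toLp_sq,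
    hg.integral_norm_sq_eq_norm_toLp_sq, Real.sqrt_sq (norm_nonneg _),
    Real.sqrt_sq (norm_nonneg _)]
  exact real_inner_le_norm _ _

theorem integral_inner_sub_le_zero_of_forall_integral_norm_sub_sq_le {C : Set (Ω → E)}
    (hC : Convex ℝ C) {X PX : Ω → E} (hX : MemLp X 2 P) (hPX : MemLp PX 2 P) (hPXC : PX ∈ C)
    (hmin : ∀ W ∈ C, MemLp W 2 P → ∫ ω, ‖X ω - PX ω‖ ^ 2 ∂P ≤ ∫ ω, ‖X ω - W ω‖ ^ 2 ∂P)
    {W : Ω → E} (hWC : W ∈ C) (hW : MemLp W 2 P) :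
    ∫ ω, ⟪X ω - PX ω, W ω - PX ω⟫ ∂P ≤ 0 := by
  set K : Set (Lp E 2 P) := {F | ∃ V ∈ C, ∃ hV : MemLp V 2 P, hV.toLp V = F}
  have hK : Convex ℝ K := by
    rintro _ ⟨V₁, hV₁C, hV₁, rfl⟩ _ ⟨V₂, hV₂C, hV₂, rfl⟩ a b ha hb hab
    refine ⟨a • V₁ + b • V₂, hC hV₁C hV₂C ha hb hab, (hV₁.const_smul a).add (hV₂.const_smul b), ?_⟩
    rw [MemLp.toLp_add (hV₁.const_smul a) (hV₂.const_smul b), MemLp.toLp_const_smul,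
      MemLp.toLp_const_smul]
  have hnorm_sub {V : Ω → E} (hV : MemLp V 2 P) :
      ‖hX.toLp X - hV.toLp V‖ ^ 2 = ∫ ω, ‖X ω - V ω‖ ^ 2 ∂P := by
    rw [← MemLp.toLp_sub, ← (hX.sub hV).integral_norm_sq_eq_norm_toLp_sq]
    rfl
  have hvar := real_inner_sub_le_zero_of_forall_norm_sub_le hK ⟨PX, hPXC, hPX, rfl⟩
    (u := hX.toLp X) (by
      rintro _ ⟨V, hVC, hV, rfl⟩
      rw [← sq_le_sq₀ (norm_nonneg _) (norm_nonneg _), hnorm_sub, hnorm_sub]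
      exact hmin V hVC hV) ⟨W, hWC, hW, rfl⟩
  rwa [← MemLp.toLp_sub, ← MemLp.toLp_sub, ← MemLp.integral_inner_eq_inner_toLp] at hvar

theorem mul_integral_norm_sub_le_integral_inner [IsFiniteMeasure P] {X PX Y : Ω → E}
    (hX : MemLp X 2 P) (hPX : MemLp PX 2 P) (hY : MemLp Y 2 P) (r : ℝ)
    (hZ : MemLp (fun ω => ‖X ω - PX ω‖⁻¹ • (X ω - PX ω)) 2 P)
    (hvar : ∫ ω, ⟪X ω - PX ω, Y ω + r • (‖X ω - PX ω‖⁻¹ • (X ω - PX ω)) - PX ω⟫ ∂P ≤ 0) :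
    r * ∫ ω, ‖PX ω - X ω‖ ∂P ≤ ∫ ω, ⟪Y ω - X ω, PX ω - X ω⟫ ∂P := by
  have hnorm : Integrable (fun ω => r * ‖PX ω - X ω‖) P :=
    (((hPX.sub hX).integrable one_le_two).norm).const_mul r
  have hvar_int : Integrable
      (fun ω => ⟪X ω - PX ω, Y ω + r • (‖X ω - PX ω‖⁻¹ • (X ω - PX ω)) - PX ω⟫) P :=
    (hX.sub hPX).integrable_inner ((hY.add (hZ.const_smul r)).sub hPX)
  have hmono := integral_mono (hnorm.sub hvar_int) ((hY.sub hX).integrable_inner (hPX.sub hX))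
    fun ω => real_inner_sub_add_smul_inv_norm_smul_le (X ω) (PX ω) (Y ω) r
  simp only [Pi.sub_apply] at hmono
  rw [integral_sub hnorm hvar_int, integral_const_mul] at hmono
  linarith

end MeasureTheory

theorem interior_point_penalization_control_general {d : ℕ} {Ω : Type*} [MeasurableSpace Ω]
    (P : Measure Ω) [IsProbabilityMeasure P]
    (C : Set (Ω → EuclideanSpace ℝ (Fin d)))
    (hCconv : Convex ℝ C)
    (Y : Ω → EuclideanSpace ℝ (Fin d)) (hY2 : MemLp Y 2 P)
    (r : ℝ)
    (hint : ∀ Z : Ω → EuclideanSpace ℝ (Fin d), Measurable Z → (∀ᵐ ω ∂P, ‖Z ω‖ ≤ 1) →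
      (fun ω => Y ω + r • Z ω) ∈ C)
    (X PX : Ω → EuclideanSpace ℝ (Fin d)) (hXm : Measurable X) (hX2 : MemLp X 2 P)
    (hPXm : Measurable PX) (hPX2 : MemLp PX 2 P)
    (hPXmem : PX ∈ C)
    (hPXmin : ∀ W ∈ C, MemLp W 2 P →
      ∫ ω, ‖X ω - PX ω‖ ^ 2 ∂P ≤ ∫ ω, ‖X ω - W ω‖ ^ 2 ∂P) :
    r * ∫ ω, ‖PX ω - X ω‖ ∂P ≤ ∫ ω, ⟪Y ω - X ω, PX ω - X ω⟫ ∂P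
    ∧ ∫ ω, ⟪Y ω - X ω, PX ω - X ω⟫ ∂P
        ≤ Real.sqrt (∫ ω, ‖Y ω - X ω‖ ^ 2 ∂P) * Real.sqrt (∫ ω, ‖PX ω - X ω‖ ^ 2 ∂P) := by
  set Z := fun ω => ‖X ω - PX ω‖⁻¹ • (X ω - PX ω)
  have hZm : Measurable Z := (hXm.sub hPXm).norm.inv.smul (hXm.sub hPXm)
  have hZ_le : ∀ ω, ‖Z ω‖ ≤ 1 := fun ω =>
    mem_closedBall_zero_iff.1 (inv_norm_smul_mem_unitClosedBall (X ω - PX ω))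
  have hZ2 : MemLp Z 2 P :=
    (memLp_top_of_bound hZm.aestronglyMeasurable 1 (ae_of_all _ hZ_le)).mono_exponent le_top
  have hWC := hint Z hZm (ae_of_all _ hZ_le)
  refine ⟨mul_integral_norm_sub_le_integral_inner hX2 hPX2 hY2 r hZ2 ?_,
    integral_inner_le_sqrt_mul_sqrt (hY2.sub hX2) (hPX2.sub hX2)⟩
  exact integral_inner_sub_le_zero_of_forall_integral_norm_sub_sq_le hCconv hX2 hPX2 hPXmem
    hPXmin hWC (hY2.add (hZ2.const_smul r))

theorem interior_point_penalization_control {d : ℕ} {Ω : Type*} [MeasurableSpace Ω]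
    (P : Measure Ω) [IsProbabilityMeasure P]
    (C : Set (Ω → EuclideanSpace ℝ (Fin d)))
    (hCconv : Convex ℝ C)
    (hCclosed : ∀ (f : ℕ → Ω → EuclideanSpace ℝ (Fin d)) (g : Ω → EuclideanSpace ℝ (Fin d)),
      (∀ n, f n ∈ C) →
      Filter.Tendsto (fun n => ∫ ω, ‖f n ω - g ω‖ ^ 2 ∂P) Filter.atTop (nhds 0) → g ∈ C)
    (Y : Ω → EuclideanSpace ℝ (Fin d)) (hYm : Measurable Y) (hY2 : MemLp Y 2 P)
    (r : ℝ) (hr : 0 < r)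
    (hint : ∀ Z : Ω → EuclideanSpace ℝ (Fin d), Measurable Z → (∀ᵐ ω ∂P, ‖Z ω‖ ≤ 1) →
      (fun ω => Y ω + r • Z ω) ∈ C)
    (X PX : Ω → EuclideanSpace ℝ (Fin d)) (hXm : Measurable X) (hX2 : MemLp X 2 P)
    (hPXm : Measurable PX) (hPX2 : MemLp PX 2 P)
    (hPXmem : PX ∈ C)
    (hPXmin : ∀ W ∈ C, MemLp W 2 P →
      ∫ ω, ‖X ω - PX ω‖ ^ 2 ∂P ≤ ∫ ω, ‖X ω - W ω‖ ^ 2 ∂P) :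
    r * ∫ ω, ‖PX ω - X ω‖ ∂P ≤ ∫ ω, ⟪Y ω - X ω, PX ω - X ω⟫ ∂P
    ∧ ∫ ω, ⟪Y ω - X ω, PX ω - X ω⟫ ∂P
        ≤ Real.sqrt (∫ ω, ‖Y ω - X ω‖ ^ 2 ∂P) * Real.sqrt (∫ ω, ‖PX ω - X ω‖ ^ 2 ∂P) :=
  interior_point_penalization_control_general P C hCconv Y hY2 r hint X PX hXm hX2 hPXm hPX2 hPXmem
    hPXmin
end
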